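/- arXiv:2404.04236 — 2 statements merged into one kernel-verified Lean document; each statement's English description precedes it below -/
import Mathlib

section
/- Let Q be an n×n Stieltjes matrix. For fixed i, j ∈ [n], the set function θ_{ij}(S) = ((Q ∘ e_S e_S⊤)†)_{ij} is supermodular: for all S, T ⊆ [n], θ_{ij}(S ∪ T) + θ_{ij}(S ∩ T) ≥ θ_{ij}(S) + θ_{ij}(T). -/
open Matrix
open scoped Classical

/-- The Moore–Penrose pseudoinverse of a real square matrix, defined via its four
characterizing equations (and `0` if no such matrix exists; by uniqueness of the
Moore–Penrose pseudoinverse, when it exists this definition picks it out). -/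
noncomputable def pinv {m : Type*} [Fintype m] [DecidableEq m]
    (A : Matrix m m ℝ) : Matrix m m ℝ :=
  if h : ∃ B : Matrix m m ℝ,
      A * B * A = A ∧ B * A * B = B ∧ (A * B)ᵀ = A * B ∧ (B * A)ᵀ = B * A
  then h.choose else 0

/-- `Q ∘ e_S e_Sᵀ`: the matrix agreeing with `Q` on entries indexed by `S × S`,
and zero elsewhere. -/
def mask {n : ℕ} (Q : Matrix (Fin n) (Fin n) ℝ) (S : Finset (Fin n)) :
    Matrix (Fin n) (Fin n) ℝ :=
  Matrix.of fun i j => if i ∈ S ∧ j ∈ S then Q i j else 0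

/-!
Write `P_S` for the inverse of the principal submatrix `Q[S, S]`, padded with zeros; for `Q`
symmetric it is the Moore–Penrose inverse of `Q ∘ e_S e_Sᵀ`. Bordering `Q[S, S]` by an index
`k ∉ S` gives the rank-one update `P_{S ∪ {k}} = P_S + γ⁻¹ b bᵀ` with `b = (1 - P_S Q) eₖ` and
Schur complement `γ = bᵀ Q b = (P_{S ∪ {k}})ₖₖ⁻¹ > 0`. Off the diagonal `b = P_S (-Q eₖ)`, so when
the off-diagonal entries of `Q` are nonpositive, induction on `S` gives `P_S ≥ 0` entrywise and
`P_S` monotone in `S`; then `b`, `(P_{S ∪ {k}})ₖₖ` and hence the increment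
`θᵢⱼ(S ∪ {k}) - θᵢⱼ(S) = (P_{S ∪ {k}})ₖₖ bᵢ bⱼ` are monotone in `S`, which is supermodularity.
-/

open Finset

theorem Finset.add_le_union_add_inter_of_insert_sub_le {α β : Type*} [DecidableEq α]
    [AddCommGroup β] [PartialOrder β] [IsOrderedAddMonoid β] (f : Finset α → β)
    (hf : ∀ ⦃S T : Finset α⦄ ⦃k : α⦄, S ⊆ T → k ∉ T →
      f (insert k S) - f S ≤ f (insert k T) - f T)
    (S T : Finset α) : f S + f T ≤ f (S ∪ T) + f (S ∩ T) := by
  suffices h : ∀ D, Disjoint S D → f S + f (D ∪ T ∩ S) ≤ f (S ∪ D) + f (T ∩ S) by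
    have hT := h (T \ S) disjoint_sdiff
    rwa [sdiff_union_inter, union_sdiff_self_eq_union, inter_comm] at hT
  intro D hD
  induction D using Finset.induction_on with
  | empty => simp
  | insert k D hkD ih =>
    obtain ⟨hkS, hD⟩ := disjoint_insert_right.1 hD
    have hstep := hf (S := D ∪ T ∩ S) (T := S ∪ D) (k := k)
      (union_subset subset_union_right (inter_subset_right.trans subset_union_left))
      (by simp [hkS, hkD])
    rw [insert_union, union_insert]
    calc f S + f (insert k (D ∪ T ∩ S))
        = (f S + f (D ∪ T ∩ S)) + (f (insert k (D ∪ T ∩ S)) - f (D ∪ T ∩ S)) := by abel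
      _ ≤ (f (S ∪ D) + f (T ∩ S)) + (f (insert k (S ∪ D)) - f (S ∪ D)) :=
          add_le_add (ih hD) hstep
      _ = f (insert k (S ∪ D)) + f (T ∩ S) := by abel

section MoorePenrose

variable {m R : Type*} [Fintype m] [CommSemiring R]

theorem Matrix.moorePenrose_unique {A B C : Matrix m m R}
    (hB1 : A * B * A = A) (hB2 : B * A * B = B) (hB3 : (A * B)ᵀ = A * B) (hB4 : (B * A)ᵀ = B * A)
    (hC1 : A * C * A = A) (hC2 : C * A * C = C) (hC3 : (A * C)ᵀ = A * C) (hC4 : (C * A)ᵀ = C * A) :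
    B = C := by
  have hAC : Aᵀ = Aᵀ * (A * C) := by
    conv_lhs => rw [← hC1]
    rw [transpose_mul, hC3]
  have hCA : Aᵀ = C * A * Aᵀ := by
    conv_lhs => rw [← hC1, Matrix.mul_assoc]
    rw [transpose_mul, hC4]
  have hAB : A * B = A * C :=
    calc A * B = Bᵀ * Aᵀ := by rw [← transpose_mul, hB3]
      _ = Bᵀ * Aᵀ * (A * C) := by rw [Matrix.mul_assoc, ← hAC]
      _ = A * B * A * C := by rw [← transpose_mul, hB3]; simp only [Matrix.mul_assoc]
      _ = A * C := by rw [hB1]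
  have hBA : B * A = C * A :=
    calc B * A = Aᵀ * Bᵀ := by rw [← transpose_mul, hB4]
      _ = C * A * (Aᵀ * Bᵀ) := by rw [← Matrix.mul_assoc, ← hCA]
      _ = C * (A * B * A) := by rw [← transpose_mul, hB4]; simp only [Matrix.mul_assoc]
      _ = C * A := by rw [hB1]
  calc B = B * A * B := hB2.symm
    _ = C * (A * C) := by rw [hBA, Matrix.mul_assoc, hAB]
    _ = C := by rw [← Matrix.mul_assoc, hC2]

variable [DecidableEq m]

theorem pinv_eq_of_isMoorePenrose {A B : Matrix m m ℝ} (h1 : A * B * A = A) (h2 : B * A * B = B)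
    (h3 : (A * B)ᵀ = A * B) (h4 : (B * A)ᵀ = B * A) : pinv A = B := by
  have hex : ∃ B : Matrix m m ℝ,
      A * B * A = A ∧ B * A * B = B ∧ (A * B)ᵀ = A * B ∧ (B * A)ᵀ = B * A := ⟨B, h1, h2, h3, h4⟩
  obtain ⟨g1, g2, g3, g4⟩ := hex.choose_spec
  rw [pinv, dif_pos hex]
  exact Matrix.moorePenrose_unique g1 g2 g3 g4 h1 h2 h3 h4

theorem pinv_eq_of_mul_eq_projection {A P E : Matrix m m ℝ} (hA : Aᵀ = A) (hP : Pᵀ = P)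
    (hE : Eᵀ = E) (hAP : A * P = E) (hEA : E * A = A) (hEP : E * P = P) : pinv A = P := by
  have hPA : P * A = E := by simpa [hA, hP, hE] using congrArg transpose hAP
  refine pinv_eq_of_isMoorePenrose ?_ ?_ ?_ ?_
  · rw [hAP, hEA]
  · rw [hPA, hEP]
  · rw [hAP, hE]
  · rw [hPA, hE]

end MoorePenrose

section CoordProj

variable {m : Type*} [DecidableEq m] {S : Finset m} {k : m}

def coordProj (S : Finset m) : Matrix m m ℝ := diagonal fun i => if i ∈ S then 1 else 0

theorem coordProj_transpose (S : Finset m) : (coordProj S)ᵀ = coordProj S := diagonal_transpose _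

theorem coordProj_mul_self [Fintype m] (S : Finset m) :
    coordProj S * coordProj S = coordProj S := by
  simp [coordProj, diagonal_mul_diagonal]

theorem coordProj_empty : coordProj (∅ : Finset m) = 0 := by simp [coordProj]

theorem coordProj_mul_apply [Fintype m] (S : Finset m) (M : Matrix m m ℝ) (i j : m) :
    (coordProj S * M) i j = if i ∈ S then M i j else 0 := by
  simp [coordProj, diagonal_mul]

theorem coordProj_mulVec_apply [Fintype m] (S : Finset m) (v : m → ℝ) (i : m) :
    (coordProj S *ᵥ v) i = if i ∈ S then v i else 0 := by
  simp [coordProj, mulVec_diagonal]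

theorem coordProj_insert (hk : k ∉ S) :
    coordProj (insert k S) = coordProj S + vecMulVec (Pi.single k 1) (Pi.single k 1) := by
  ext i j
  simp only [coordProj, diagonal_apply, vecMulVec_apply, Matrix.add_apply, Pi.single_apply,
    mem_insert]
  split_ifs <;> simp_all

end CoordProj

theorem mask_eq_coordProj {n : ℕ} (Q : Matrix (Fin n) (Fin n) ℝ) (S : Finset (Fin n)) :
    mask Q S = coordProj S * Q * coordProj S := by
  ext i j
  simp only [mask, coordProj, of_apply, diagonal_mul, mul_diagonal]
  split_ifs <;> simp_all

section EmbeddedInverse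

variable {m : Type*} [Fintype m] [DecidableEq m] {Q P : Matrix m m ℝ} {S T : Finset m} {k : m}

/-- `P` is the inverse of the principal submatrix `Q[S, S]`, padded with zeros. -/
structure IsEmbeddedInverse (Q : Matrix m m ℝ) (S : Finset m) (P : Matrix m m ℝ) : Prop where
  transpose_eq : Pᵀ = P
  coordProj_mul : coordProj S * P = P
  coordProj_mul_mul : coordProj S * Q * P = coordProj S

theorem isEmbeddedInverse_empty (Q : Matrix m m ℝ) : IsEmbeddedInverse Q ∅ 0 :=
  ⟨transpose_zero, Matrix.mul_zero _, by rw [Matrix.mul_zero, coordProj_empty]⟩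

/-- For `P = Q[S, S]⁻¹` this is `eₖ - x` with `Q[S, S] x = Q[S, k]`, the column that borders
`Q[S, S]` inside `Q[S ∪ {k}, S ∪ {k}]`. -/
def borderVec (Q P : Matrix m m ℝ) (k : m) : m → ℝ := Pi.single k 1 - P *ᵥ Q *ᵥ Pi.single k 1

namespace IsEmbeddedInverse

theorem apply_of_notMem_left (h : IsEmbeddedInverse Q S P) {i : m} (hi : i ∉ S) (j : m) :
    P i j = 0 := by
  rw [← h.coordProj_mul, coordProj_mul_apply, if_neg hi]

theorem apply_of_notMem_right (h : IsEmbeddedInverse Q S P) (i : m) {j : m} (hj : j ∉ S) :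
    P i j = 0 := by
  rw [← h.transpose_eq, transpose_apply, h.apply_of_notMem_left hj]

theorem coordProj_mul_of_subset (h : IsEmbeddedInverse Q S P) (hST : S ⊆ T) :
    coordProj T * P = P := by
  ext i j
  rw [coordProj_mul_apply]
  split_ifs with hi
  · rfl
  · exact (h.apply_of_notMem_left (fun hiS => hi (hST hiS)) j).symm

theorem coordProj_mulVec_mulVec_borderVec (h : IsEmbeddedInverse Q S P) :
    coordProj S *ᵥ Q *ᵥ borderVec Q P k = 0 := by
  rw [borderVec, mulVec_sub, mulVec_sub, mulVec_mulVec, mulVec_mulVec, mulVec_mulVec,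
    mulVec_mulVec, h.coordProj_mul_mul, sub_self]

theorem borderVec_apply_self (h : IsEmbeddedInverse Q S P) (hk : k ∉ S) :
    borderVec Q P k k = 1 := by
  simp [borderVec, mulVec, dotProduct, h.apply_of_notMem_left hk]

theorem coordProj_insert_mulVec_borderVec (h : IsEmbeddedInverse Q S P) :
    coordProj (insert k S) *ᵥ borderVec Q P k = borderVec Q P k := by
  rw [borderVec, mulVec_sub, mulVec_mulVec, h.coordProj_mul_of_subset (subset_insert k S)]
  congr 1
  ext i
  rw [coordProj_mulVec_apply]
  split_ifs with hi
  · rfl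
  · have hik : i ≠ k := fun hik => hi (hik ▸ mem_insert_self k S)
    simp [hik]

theorem borderVec_dotProduct_mulVec_borderVec (h : IsEmbeddedInverse Q S P) :
    borderVec Q P k ⬝ᵥ Q *ᵥ borderVec Q P k = Pi.single k 1 ⬝ᵥ Q *ᵥ borderVec Q P k := by
  have hx : P *ᵥ Q *ᵥ Pi.single k 1 = (P *ᵥ Q *ᵥ Pi.single k 1) ᵥ* coordProj S := by
    rw [← mulVec_transpose, coordProj_transpose, mulVec_mulVec _ (coordProj S) P, h.coordProj_mul]
  have hperp : (P *ᵥ Q *ᵥ Pi.single k 1) ⬝ᵥ Q *ᵥ borderVec Q P k = 0 := by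
    rw [hx, ← dotProduct_mulVec, h.coordProj_mulVec_mulVec_borderVec, dotProduct_zero]
  nth_rw 1 [borderVec]
  rw [sub_dotProduct, hperp, sub_zero]

theorem borderVec_dotProduct_mulVec_borderVec_pos (h : IsEmbeddedInverse Q S P) (hQ : Q.PosDef)
    (hk : k ∉ S) : 0 < borderVec Q P k ⬝ᵥ Q *ᵥ borderVec Q P k := by
  have hb : borderVec Q P k ≠ 0 := fun hb => by simpa [hb] using h.borderVec_apply_self hk
  simpa using hQ.dotProduct_mulVec_pos hb

/-- The bordering formula: the Schur complement of `Q[S, S]` in `Q[S ∪ {k}, S ∪ {k}]` is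
`bᵀ Q b` for `b = borderVec Q P k`. -/
theorem insert_rankOne (h : IsEmbeddedInverse Q S P) (hQ : Q.PosDef) (hk : k ∉ S) :
    IsEmbeddedInverse Q (insert k S) (P + (borderVec Q P k ⬝ᵥ Q *ᵥ borderVec Q P k)⁻¹ •
      vecMulVec (borderVec Q P k) (borderVec Q P k)) := by
  set b := borderVec Q P k
  set γ := b ⬝ᵥ Q *ᵥ b
  have hγ : γ ≠ 0 := (h.borderVec_dotProduct_mulVec_borderVec_pos hQ hk).ne'
  have hQs : Qᵀ = Q := (isHermitian_iff_isSymm.1 hQ.isHermitian).eq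
  refine ⟨?_, ?_, ?_⟩
  · rw [transpose_add, transpose_smul, h.transpose_eq, transpose_vecMulVec]
  · rw [Matrix.mul_add, Matrix.mul_smul, mul_vecMulVec, h.coordProj_insert_mulVec_borderVec,
      h.coordProj_mul_of_subset (subset_insert k S)]
  · have hQP : coordProj (insert k S) * Q * P =
        coordProj S + vecMulVec (Pi.single k 1) (P *ᵥ Q *ᵥ Pi.single k 1) := by
      rw [coordProj_insert hk, Matrix.add_mul, Matrix.add_mul, h.coordProj_mul_mul, vecMulVec_mul,
        vecMulVec_mul, vecMul_vecMul, mulVec_mulVec, ← vecMul_transpose, transpose_mul, hQs,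
        h.transpose_eq]
    have hQb : coordProj (insert k S) *ᵥ Q *ᵥ b = γ • Pi.single k 1 := by
      rw [coordProj_insert hk, add_mulVec, h.coordProj_mulVec_mulVec_borderVec, zero_add,
        vecMulVec_mulVec, ← h.borderVec_dotProduct_mulVec_borderVec, op_smul_eq_smul]
    rw [Matrix.mul_add, Matrix.mul_smul, mul_vecMulVec, ← mulVec_mulVec, hQb, hQP,
      coordProj_insert hk, add_assoc, smul_vecMulVec, inv_smul_smul₀ hγ, ← vecMulVec_add]
    simp only [b, borderVec, add_sub_cancel]

end IsEmbeddedInverse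

end EmbeddedInverse

section Stieltjes

variable {n : ℕ} {Q P P' : Matrix (Fin n) (Fin n) ℝ} {S T : Finset (Fin n)} {k : Fin n}

theorem IsEmbeddedInverse.pinv_mask_eq (hQs : Qᵀ = Q) (h : IsEmbeddedInverse Q S P) :
    pinv (mask Q S) = P := by
  rw [mask_eq_coordProj]
  refine pinv_eq_of_mul_eq_projection ?_ h.transpose_eq (coordProj_transpose S) ?_ ?_
    h.coordProj_mul
  · rw [transpose_mul, transpose_mul, coordProj_transpose, hQs, Matrix.mul_assoc]
  · rw [Matrix.mul_assoc _ (coordProj S), h.coordProj_mul, h.coordProj_mul_mul]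
  · rw [← Matrix.mul_assoc, ← Matrix.mul_assoc, coordProj_mul_self]

theorem isEmbeddedInverse_pinv_mask (hQ : Q.PosDef) (S : Finset (Fin n)) :
    IsEmbeddedInverse Q S (pinv (mask Q S)) := by
  have hQs : Qᵀ = Q := (isHermitian_iff_isSymm.1 hQ.isHermitian).eq
  induction S using Finset.induction_on with
  | empty =>
    have h := isEmbeddedInverse_empty Q
    rwa [h.pinv_mask_eq hQs]
  | insert k S hk ih =>
    have h := ih.insert_rankOne hQ hk
    rwa [h.pinv_mask_eq hQs]

theorem pinv_mask_insert (hQ : Q.PosDef) (hk : k ∉ S) :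
    pinv (mask Q (insert k S)) = pinv (mask Q S) +
      (borderVec Q (pinv (mask Q S)) k ⬝ᵥ Q *ᵥ borderVec Q (pinv (mask Q S)) k)⁻¹ •
        vecMulVec (borderVec Q (pinv (mask Q S)) k) (borderVec Q (pinv (mask Q S)) k) :=
  ((isEmbeddedInverse_pinv_mask hQ S).insert_rankOne hQ hk).pinv_mask_eq
    (isHermitian_iff_isSymm.1 hQ.isHermitian).eq

theorem pinv_mask_insert_apply_self (hQ : Q.PosDef) (hk : k ∉ S) :
    pinv (mask Q (insert k S)) k k =
      (borderVec Q (pinv (mask Q S)) k ⬝ᵥ Q *ᵥ borderVec Q (pinv (mask Q S)) k)⁻¹ := by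
  have h := isEmbeddedInverse_pinv_mask hQ S
  simp [pinv_mask_insert hQ hk, vecMulVec_apply, h.apply_of_notMem_left hk,
    h.borderVec_apply_self hk]

theorem pinv_mask_insert_apply (hQ : Q.PosDef) (hk : k ∉ S) (i j : Fin n) :
    pinv (mask Q (insert k S)) i j = pinv (mask Q S) i j + pinv (mask Q (insert k S)) k k *
      (borderVec Q (pinv (mask Q S)) k i * borderVec Q (pinv (mask Q S)) k j) := by
  rw [pinv_mask_insert_apply_self hQ hk, pinv_mask_insert hQ hk]
  simp [vecMulVec_apply]

theorem borderVec_le_borderVec (hoff : ∀ i j : Fin n, i ≠ j → Q i j ≤ 0)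
    (hS : IsEmbeddedInverse Q S P) (hT : IsEmbeddedInverse Q T P') (hkS : k ∉ S) (hkT : k ∉ T)
    (hle : ∀ i j, P i j ≤ P' i j) (i : Fin n) : borderVec Q P k i ≤ borderVec Q P' k i := by
  obtain rfl | hik := eq_or_ne i k
  · rw [hS.borderVec_apply_self hkS, hT.borderVec_apply_self hkT]
  · rw [borderVec, borderVec, mulVec_single_one]
    simp only [Pi.sub_apply, Pi.single_eq_of_ne hik, zero_sub, neg_le_neg_iff, mulVec,
      dotProduct]
    refine sum_le_sum fun l _ => ?_
    obtain rfl | hlk := eq_or_ne l k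
    · simp [hS.apply_of_notMem_right i hkS, hT.apply_of_notMem_right i hkT]
    · exact mul_le_mul_of_nonpos_right (hle i l) (hoff l k hlk)

theorem borderVec_nonneg (hoff : ∀ i j : Fin n, i ≠ j → Q i j ≤ 0)
    (h : IsEmbeddedInverse Q S P) (hk : k ∉ S) (hP : ∀ i j, 0 ≤ P i j) (i : Fin n) :
    0 ≤ borderVec Q P k i := by
  have h0 := borderVec_le_borderVec hoff (isEmbeddedInverse_empty Q) h (notMem_empty k) hk hP i
  simp only [borderVec, zero_mulVec, sub_zero] at h0
  exact (Pi.single_nonneg.2 zero_le_one) i |>.trans h0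

variable (hQ : Q.PosDef) (hoff : ∀ i j : Fin n, i ≠ j → Q i j ≤ 0)
include hQ hoff

theorem pinv_mask_le_insert (hS : ∀ i j, 0 ≤ pinv (mask Q S) i j) (hk : k ∉ S) (i j : Fin n) :
    pinv (mask Q S) i j ≤ pinv (mask Q (insert k S)) i j := by
  have h := isEmbeddedInverse_pinv_mask hQ S
  rw [pinv_mask_insert_apply hQ hk, le_add_iff_nonneg_right, pinv_mask_insert_apply_self hQ hk]
  exact mul_nonneg (inv_nonneg.2 (h.borderVec_dotProduct_mulVec_borderVec_pos hQ hk).le)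
    (mul_nonneg (borderVec_nonneg hoff h hk hS i) (borderVec_nonneg hoff h hk hS j))

theorem pinv_mask_nonneg (S : Finset (Fin n)) (i j : Fin n) : 0 ≤ pinv (mask Q S) i j := by
  induction S using Finset.induction_on generalizing i j with
  | empty => simp [(isEmbeddedInverse_empty Q).pinv_mask_eq
      (isHermitian_iff_isSymm.1 hQ.isHermitian).eq]
  | insert k S hk ih => exact (ih i j).trans (pinv_mask_le_insert hQ hoff ih hk i j)

theorem pinv_mask_mono (i j : Fin n) : Monotone fun S => pinv (mask Q S) i j :=
  Finset.monotone_iff_forall_le_insert.2 fun S _ hk =>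
    pinv_mask_le_insert hQ hoff (pinv_mask_nonneg hQ hoff S) hk i j

theorem pinv_mask_insert_sub_le (hST : S ⊆ T) (hk : k ∉ T) (i j : Fin n) :
    pinv (mask Q (insert k S)) i j - pinv (mask Q S) i j ≤
      pinv (mask Q (insert k T)) i j - pinv (mask Q T) i j := by
  have hkS : k ∉ S := fun hkS => hk (hST hkS)
  have hS := isEmbeddedInverse_pinv_mask hQ S
  have hb0 := borderVec_nonneg hoff hS hkS (pinv_mask_nonneg hQ hoff S)
  have hb := borderVec_le_borderVec hoff hS (isEmbeddedInverse_pinv_mask hQ T) hkS hk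
    (fun i j => pinv_mask_mono hQ hoff i j hST)
  rw [pinv_mask_insert_apply hQ hkS, pinv_mask_insert_apply hQ hk, add_sub_cancel_left,
    add_sub_cancel_left]
  exact mul_le_mul (pinv_mask_mono hQ hoff k k (insert_subset_insert k hST))
    (mul_le_mul (hb i) (hb j) (hb0 j) ((hb0 i).trans (hb i))) (mul_nonneg (hb0 i) (hb0 j))
    (pinv_mask_nonneg hQ hoff _ k k)

end Stieltjes

/-- for a Stieltjes matrix `Q`, the set function
`θ_{ij}(S) = ((Q ∘ e_S e_Sᵀ)†)_{ij}` is supermodular. -/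
theorem stmt8 {n : ℕ} (Q : Matrix (Fin n) (Fin n) ℝ)
    (hQ : Q.PosDef) (hoff : ∀ i j : Fin n, i ≠ j → Q i j ≤ 0)
    (i j : Fin n) (S T : Finset (Fin n)) :
    pinv (mask Q S) i j + pinv (mask Q T) i j ≤
      pinv (mask Q (S ∪ T)) i j + pinv (mask Q (S ∩ T)) i j :=
  Finset.add_le_union_add_inter_of_insert_sub_le (fun S => pinv (mask Q S) i j)
    (fun _ _ _ hST hk => pinv_mask_insert_sub_le hQ hoff hST hk i j) S T
end

section
/- Let Q be an n×n Stieltjes matrix, z ∈ {0,1}^n, and W = (Q ∘ z z⊤)†. Then 0 ≤ W_{ij} ≤ (Q⁻¹)_{ij} for all i, j ∈ [n]. In particular, if (Q⁻¹)_{ij} = 0 then W_{ij} = 0. -/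
/-!
Let `S` be the support of `z` and `P` the `n × |S|` matrix whose columns are the unit vectors
`e_s`, `s ∈ S`. Then `Q ∘ z zᵀ = P Q_S Pᵀ` with `Q_S` the principal submatrix on `S`, and since
`Pᵀ P = 1` the Moore–Penrose inverse of `P Q_S Pᵀ` is `P Q_S⁻¹ Pᵀ`.

`Q` and `Q_S` are positive definite Z-matrices, hence inverse-positive: if `Q x ≥ 0`, pairing with
the negative part `x⁻` gives `x⁻ᵀ Q x⁻ ≤ x⁻ᵀ Q x⁺ ≤ 0`, so `x⁻ = 0`. For the upper bound,
`Q (Q⁻¹ - P Q_S⁻¹ Pᵀ)` vanishes on the rows in `S` and is nonnegative on the other rows (there the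
entries of `Q P` are off-diagonal, hence `≤ 0`, and `Q_S⁻¹ Pᵀ ≥ 0`), so `Q⁻¹ ≥ P Q_S⁻¹ Pᵀ`
entrywise.
-/

open Matrix
open scoped Classical

section MoorePenrose

variable {m n R : Type*} [Fintype m] [Fintype n] [CommSemiring R]

def IsMoorePenroseInverse (A : Matrix m n R) (B : Matrix n m R) : Prop :=
  A * B * A = A ∧ B * A * B = B ∧ (A * B)ᵀ = A * B ∧ (B * A)ᵀ = B * A

theorem IsMoorePenroseInverse.unique {A : Matrix m n R} {B C : Matrix n m R}
    (hB : IsMoorePenroseInverse A B) (hC : IsMoorePenroseInverse A C) : B = C := by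
  obtain ⟨hB₁, hB₂, hB₃, hB₄⟩ := hB
  obtain ⟨hC₁, hC₂, hC₃, hC₄⟩ := hC
  have hAB : A * B = A * C := calc
    A * B = (A * C * A) * B := by rw [hC₁]
    _ = (A * C)ᵀ * (A * B)ᵀ := by rw [hC₃, hB₃, Matrix.mul_assoc]
    _ = (A * B * A * C)ᵀ := by simp only [transpose_mul, Matrix.mul_assoc]
    _ = A * C := by rw [hB₁, hC₃]
  have hBA : B * A = C * A := calc
    B * A = B * (A * C * A) := by rw [hC₁]
    _ = (B * A)ᵀ * (C * A)ᵀ := by rw [hB₄, hC₄]; simp only [Matrix.mul_assoc]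
    _ = (C * (A * B * A))ᵀ := by simp only [transpose_mul, Matrix.mul_assoc]
    _ = C * A := by rw [hB₁, hC₄]
  calc B = B * A * B := hB₂.symm
    _ = C * A * C := by rw [hBA, Matrix.mul_assoc, hAB, ← Matrix.mul_assoc]
    _ = C := hC₂

end MoorePenrose

theorem pinv_eq_of_isMoorePenroseInverse {m : Type*} [Fintype m] [DecidableEq m]
    {A B : Matrix m m ℝ} (h : IsMoorePenroseInverse A B) : pinv A = B := by
  have hex : ∃ C, IsMoorePenroseInverse A C := ⟨B, h⟩
  exact (dif_pos hex).trans (hex.choose_spec.unique h)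

section SelectionMatrix

variable {k l m : Type*} (R : Type*) [DecidableEq m] [CommSemiring R]

def selectionMatrix (e : k → m) : Matrix m k R := (1 : Matrix m m R).submatrix id e

variable {R} {e : k → m}

theorem selectionMatrix_conj_apply_of_notMem_range [Fintype k] (X : Matrix k k R) {i j : m}
    (h : i ∉ Set.range e ∨ j ∉ Set.range e) :
    (selectionMatrix R e * X * (selectionMatrix R e)ᵀ) i j = 0 := by
  have hrow : ∀ i ∉ Set.range e, ∀ s, selectionMatrix R e i s = 0 :=
    fun i hi s => one_apply_ne fun h => hi ⟨s, h.symm⟩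
  rcases h with hi | hj
  · simp [mul_apply, hrow i hi]
  · simp [mul_apply, hrow j hj]

variable [Fintype m]

theorem mul_selectionMatrix_apply (N : Matrix l m R) (i : l) (s : k) :
    (N * selectionMatrix R e) i s = N i (e s) := by
  simp [selectionMatrix, mul_apply, one_apply]

theorem selectionMatrix_transpose_mul_apply (N : Matrix m l R) (s : k) (j : l) :
    ((selectionMatrix R e)ᵀ * N) s j = N (e s) j := by
  simp [selectionMatrix, mul_apply, one_apply]

theorem selectionMatrix_transpose_mul_mul (N : Matrix m m R) :
    (selectionMatrix R e)ᵀ * N * selectionMatrix R e = N.submatrix e e := by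
  ext s t
  rw [mul_selectionMatrix_apply, selectionMatrix_transpose_mul_apply, submatrix_apply]

variable [DecidableEq k]

theorem selectionMatrix_transpose_mul_self (he : Function.Injective e) :
    (selectionMatrix R e)ᵀ * selectionMatrix R e = 1 := by
  simpa [submatrix_one _ he] using selectionMatrix_transpose_mul_mul (e := e) (1 : Matrix m m R)

variable [Fintype k]

theorem selectionMatrix_conj_mul_conj (he : Function.Injective e) (X Y : Matrix k k R) :
    selectionMatrix R e * X * (selectionMatrix R e)ᵀ
        * (selectionMatrix R e * Y * (selectionMatrix R e)ᵀ)
      = selectionMatrix R e * (X * Y) * (selectionMatrix R e)ᵀ := by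
  simp only [Matrix.mul_assoc]
  rw [← Matrix.mul_assoc (selectionMatrix R e)ᵀ, selectionMatrix_transpose_mul_self he,
    Matrix.one_mul]

theorem submatrix_selectionMatrix_conj (he : Function.Injective e) (X : Matrix k k R) :
    (selectionMatrix R e * X * (selectionMatrix R e)ᵀ).submatrix e e = X := by
  rw [← selectionMatrix_transpose_mul_mul]
  simp only [← Matrix.mul_assoc, selectionMatrix_transpose_mul_self he, Matrix.one_mul]
  rw [Matrix.mul_assoc, selectionMatrix_transpose_mul_self he, Matrix.mul_one]

theorem selectionMatrix_conj_apply (he : Function.Injective e) (X : Matrix k k R) (s t : k) :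
    (selectionMatrix R e * X * (selectionMatrix R e)ᵀ) (e s) (e t) = X s t :=
  congrFun (congrFun (submatrix_selectionMatrix_conj he X) s) t

end SelectionMatrix

theorem pinv_selectionMatrix_conj {k m : Type*} [Fintype k] [DecidableEq k] [Fintype m]
    [DecidableEq m] {e : k → m} (he : Function.Injective e) {A : Matrix k k ℝ}
    (hA : IsUnit A) :
    pinv (selectionMatrix ℝ e * A * (selectionMatrix ℝ e)ᵀ)
      = selectionMatrix ℝ e * A⁻¹ * (selectionMatrix ℝ e)ᵀ := by
  set P := selectionMatrix ℝ e
  replace hA := (isUnit_iff_isUnit_det A).mp hA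
  have hAB : P * A * Pᵀ * (P * A⁻¹ * Pᵀ) = P * (1 : Matrix k k ℝ) * Pᵀ := by
    rw [selectionMatrix_conj_mul_conj he, mul_nonsing_inv _ hA]
  have hBA : P * A⁻¹ * Pᵀ * (P * A * Pᵀ) = P * (1 : Matrix k k ℝ) * Pᵀ := by
    rw [selectionMatrix_conj_mul_conj he, nonsing_inv_mul _ hA]
  have hsymm : (P * (1 : Matrix k k ℝ) * Pᵀ)ᵀ = P * (1 : Matrix k k ℝ) * Pᵀ := by
    simp only [Matrix.mul_one, transpose_mul, transpose_transpose]
  apply pinv_eq_of_isMoorePenroseInverse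
  refine ⟨?_, ?_, hAB ▸ hsymm, hBA ▸ hsymm⟩
  · rw [hAB, selectionMatrix_conj_mul_conj he, Matrix.one_mul]
  · rw [hBA, selectionMatrix_conj_mul_conj he, Matrix.one_mul]

def IsZMatrix {m : Type*} (Q : Matrix m m ℝ) : Prop := ∀ i j, i ≠ j → Q i j ≤ 0

namespace IsZMatrix

variable {k m : Type*} {Q : Matrix m m ℝ}

theorem submatrix (hZ : IsZMatrix Q) {e : k → m} (he : Function.Injective e) :
    IsZMatrix (Q.submatrix e e) :=
  fun _ _ hst => hZ _ _ (he.ne hst)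

variable [Fintype m]

theorem dotProduct_mulVec_nonpos (hZ : IsZMatrix Q) {p q : m → ℝ} (hp : 0 ≤ p) (hq : 0 ≤ q)
    (hpq : ∀ i, q i * p i = 0) : q ⬝ᵥ Q *ᵥ p ≤ 0 := by
  refine Finset.sum_nonpos fun i _ => ?_
  rw [mulVec, dotProduct, Finset.mul_sum]
  refine Finset.sum_nonpos fun j _ => ?_
  rcases eq_or_ne i j with rfl | hij
  · rw [mul_left_comm, hpq, mul_zero]
  · exact mul_nonpos_of_nonneg_of_nonpos (hq i)
      (mul_nonpos_of_nonpos_of_nonneg (hZ i j hij) (hp j))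

theorem nonneg_of_mulVec_nonneg (hZ : IsZMatrix Q) (hQ : Q.PosDef) {x : m → ℝ}
    (hx : 0 ≤ Q *ᵥ x) : 0 ≤ x := by
  have hdisj : ∀ i, x⁻ i * x⁺ i = 0 := by
    intro i
    rcases le_total (x i) 0 with h | h
    · simp [posPart_eq_zero.2 h]
    · simp [negPart_eq_zero.2 h]
  rw [← negPart_eq_zero]
  by_contra hne
  have hpos : 0 < x⁻ ⬝ᵥ Q *ᵥ x⁻ := by simpa using hQ.dotProduct_mulVec_pos hne
  have hnonneg : 0 ≤ x⁻ ⬝ᵥ Q *ᵥ x := dotProduct_nonneg_of_nonneg (negPart_nonneg x) hx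
  have hcross : x⁻ ⬝ᵥ Q *ᵥ x⁺ ≤ 0 :=
    hZ.dotProduct_mulVec_nonpos (posPart_nonneg x) (negPart_nonneg x) hdisj
  have hsplit : x⁻ ⬝ᵥ Q *ᵥ x = x⁻ ⬝ᵥ Q *ᵥ x⁺ - x⁻ ⬝ᵥ Q *ᵥ x⁻ := by
    rw [← dotProduct_sub, ← mulVec_sub, posPart_sub_negPart]
  linarith

theorem nonneg_of_mul_nonneg (hZ : IsZMatrix Q) (hQ : Q.PosDef) {X : Matrix m k ℝ}
    (hX : ∀ i j, 0 ≤ (Q * X) i j) (i : m) (j : k) : 0 ≤ X i j :=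
  hZ.nonneg_of_mulVec_nonneg hQ (x := fun i => X i j) (fun i => hX i j) i

variable [DecidableEq m]

theorem inv_nonneg (hZ : IsZMatrix Q) (hQ : Q.PosDef) (i j : m) : 0 ≤ Q⁻¹ i j := by
  refine hZ.nonneg_of_mul_nonneg hQ (fun i j => ?_) i j
  rw [mul_nonsing_inv _ ((isUnit_iff_isUnit_det Q).mp hQ.isUnit)]
  exact zero_le_one_elem i j

theorem inv_submatrix_le [Fintype k] [DecidableEq k] (hZ : IsZMatrix Q) (hQ : Q.PosDef)
    {e : k → m} (he : Function.Injective e) (s t : k) :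
    (Q.submatrix e e)⁻¹ s t ≤ Q⁻¹ (e s) (e t) := by
  set P := selectionMatrix ℝ e
  set B := Q.submatrix e e
  have hB : B * B⁻¹ = 1 :=
    mul_nonsing_inv _ ((isUnit_iff_isUnit_det B).mp (hQ.submatrix he).isUnit)
  have hBinv : ∀ s t, 0 ≤ B⁻¹ s t := (hZ.submatrix he).inv_nonneg (hQ.submatrix he)
  suffices ∀ i j, 0 ≤ (Q⁻¹ - P * B⁻¹ * Pᵀ) i j by
    simpa [P, selectionMatrix_conj_apply he] using this (e s) (e t)
  refine hZ.nonneg_of_mul_nonneg hQ fun i j => ?_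
  rw [Matrix.mul_sub, mul_nonsing_inv _ ((isUnit_iff_isUnit_det Q).mp hQ.isUnit), Matrix.sub_apply]
  by_cases hi : i ∈ Set.range e
  · obtain ⟨s, rfl⟩ := hi
    have hrow : (Q * (P * B⁻¹ * Pᵀ)) (e s) j = (1 : Matrix m m ℝ) (e s) j := calc
      _ = (Pᵀ * Q * P * B⁻¹ * Pᵀ) s j := by
        rw [← selectionMatrix_transpose_mul_apply (e := e) (Q * (P * B⁻¹ * Pᵀ)) s j]
        simp only [P, Matrix.mul_assoc]
      _ = (Pᵀ * (1 : Matrix m m ℝ)) s j := by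
        rw [selectionMatrix_transpose_mul_mul, hB, Matrix.one_mul, Matrix.mul_one]
      _ = _ := selectionMatrix_transpose_mul_apply _ _ _
    rw [hrow, sub_self]
  · have hrow : (Q * (P * B⁻¹ * Pᵀ)) i j ≤ 0 := by
      rw [Matrix.mul_assoc P, ← Matrix.mul_assoc Q, mul_apply]
      refine Finset.sum_nonpos fun s _ => mul_nonpos_of_nonpos_of_nonneg ?_ ?_
      · rw [mul_selectionMatrix_apply]
        exact hZ _ _ fun h => hi ⟨s, h.symm⟩
      · rw [mul_apply]
        exact Finset.sum_nonneg fun t _ => mul_nonneg (hBinv s t) (zero_le_one_elem j (e t))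
    linarith [zero_le_one_elem (α := ℝ) i j]

end IsZMatrix

theorem of_mul_mul_eq_selectionMatrix_conj {k m R : Type*} [Fintype k] [DecidableEq k]
    [Fintype m] [DecidableEq m] [CommSemiring R] (Q : Matrix m m R) {z : m → R} {e : k → m}
    (he : Function.Injective e) (h1 : ∀ s, z (e s) = 1) (h0 : ∀ i ∉ Set.range e, z i = 0) :
    (of fun i j => Q i j * (z i * z j))
      = selectionMatrix R e * Q.submatrix e e * (selectionMatrix R e)ᵀ := by
  ext i j
  by_cases h : i ∈ Set.range e ∧ j ∈ Set.range e
  · obtain ⟨⟨s, rfl⟩, ⟨t, rfl⟩⟩ := h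
    rw [of_apply, selectionMatrix_conj_apply he, submatrix_apply, h1, h1, mul_one, mul_one]
  · rw [of_apply, selectionMatrix_conj_apply_of_notMem_range _ (not_and_or.mp h)]
    rcases not_and_or.mp h with hi | hj
    · rw [h0 i hi, zero_mul, mul_zero]
    · rw [h0 j hj, mul_zero, mul_zero]

/-- for a Stieltjes matrix `Q` and `z ∈ {0,1}ⁿ`, with `W = (Q ∘ z zᵀ)†`,
one has `0 ≤ W_{ij} ≤ (Q⁻¹)_{ij}`; in particular `(Q⁻¹)_{ij} = 0` forces `W_{ij} = 0`. -/
theorem stmt13 {n : ℕ} (Q : Matrix (Fin n) (Fin n) ℝ)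
    (hQ : Q.PosDef) (hoff : ∀ i j : Fin n, i ≠ j → Q i j ≤ 0)
    (z : Fin n → ℝ) (hz : ∀ i, z i = 0 ∨ z i = 1) :
    ∀ i j : Fin n,
      0 ≤ pinv (Matrix.of fun i j => Q i j * (z i * z j)) i j ∧
      pinv (Matrix.of fun i j => Q i j * (z i * z j)) i j ≤ Q⁻¹ i j ∧
      (Q⁻¹ i j = 0 → pinv (Matrix.of fun i j => Q i j * (z i * z j)) i j = 0) := by
  intro i j
  have he : Function.Injective (Subtype.val : {i // z i = 1} → Fin n) := Subtype.val_injective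
  have hQS := hQ.submatrix he
  have hout : ∀ i ∉ Set.range (Subtype.val : {i // z i = 1} → Fin n), z i = 0 :=
    fun i hi => (hz i).resolve_right fun h => hi ⟨⟨i, h⟩, rfl⟩
  rw [of_mul_mul_eq_selectionMatrix_conj Q he Subtype.prop hout,
    pinv_selectionMatrix_conj he hQS.isUnit]
  by_cases h : z i = 1 ∧ z j = 1
  · have hle := IsZMatrix.inv_submatrix_le hoff hQ he ⟨i, h.1⟩ ⟨j, h.2⟩
    have hnonneg := (IsZMatrix.submatrix hoff he).inv_nonneg hQS ⟨i, h.1⟩ ⟨j, h.2⟩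
    rw [selectionMatrix_conj_apply he _ ⟨i, h.1⟩ ⟨j, h.2⟩]
    exact ⟨hnonneg, hle, fun h0 => le_antisymm (h0 ▸ hle) hnonneg⟩
  · rw [selectionMatrix_conj_apply_of_notMem_range _ (by simpa using not_and_or.mp h)]
    exact ⟨le_rfl, IsZMatrix.inv_nonneg hoff hQ i j, fun _ => rfl⟩
end
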